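/- arXiv:2401.06555 — 2 statements merged into one kernel-verified Lean document; each statement's English description precedes it below -/
import Mathlib

section
/- For every integer x ≥ 1 the following hold: if 3 divides x, then ν_2(L_x − 1 − (−1)^x) = 2 + 2·ν_2(x) and ν_2(L_x + 1 + (−1)^x) = 2; if 3 does not divide x, then both integers L_x − 1 − (−1)^x and L_x + 1 + (−1)^x are odd. (These integers are, up to sign, the field norms from ℚ(√5) of α^x − 1 and α^x + 1 respectively: (α^x − 1)(β^x − 1) = (−1)^x + 1 − L_x and (α^x + 1)(β^x + 1) = (−1)^x + 1 + L_x, so this is the integer form of the valuation formulas ν_2(α^x − 1) = 1 + ν_2(x) if 3 | x and 0 otherwise, and ν_2(α^x + 1) = 1 if 3 | x and 0 otherwise.) -/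
/-! The doubling formula `L (2m) = L m ^ 2 - 2 (-1) ^ m` factors `L (2m) - 2` as
`(L m - 1 - (-1) ^ m) * (L m + 1 + (-1) ^ m)`. Writing `x = 2 ^ k * o` with `o` odd, each factor 2
of `x` therefore adds 2 to the first valuation, which reduces it to the odd case, where both
integers equal `L o`.
The Lucas numbers are 12-periodic mod 8 and 3-periodic mod 2, so `L n + 1 + (-1) ^ n ≡ 4 [ZMOD 8]`
when `3 ∣ n`, while `L n` is odd when `3 ∤ n`. -/

/-- The Lucas sequence: L 0 = 2, L 1 = 1, L (n+2) = L (n+1) + L n. -/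
def lucas : ℕ → ℤ
  | 0 => 2
  | 1 => 1
  | n + 2 => lucas (n + 1) + lucas n

lemma lucas_add_two (n : ℕ) : lucas (n + 2) = lucas (n + 1) + lucas n := rfl

lemma lucas_add_modEq {m : ℤ} {p : ℕ} (h₀ : lucas p ≡ lucas 0 [ZMOD m])
    (h₁ : lucas (p + 1) ≡ lucas 1 [ZMOD m]) (n : ℕ) : lucas (n + p) ≡ lucas n [ZMOD m] := by
  induction n using Nat.twoStepInduction with
  | zero => simpa using h₀
  | one => simpa [add_comm] using h₁
  | more n ih₀ ih₁ =>
    rw [show n + 2 + p = n + p + 2 by ring, lucas_add_two, lucas_add_two,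
      show n + p + 1 = n + 1 + p by ring]
    exact ih₁.add ih₀

lemma lucas_modEq_lucas_mod {m : ℤ} {p : ℕ} (h₀ : lucas p ≡ lucas 0 [ZMOD m])
    (h₁ : lucas (p + 1) ≡ lucas 1 [ZMOD m]) (n : ℕ) : lucas n ≡ lucas (n % p) [ZMOD m] := by
  have periodic (k r : ℕ) : lucas (r + p * k) ≡ lucas r [ZMOD m] := by
    induction k with
    | zero => simp [Int.ModEq.refl]
    | succ k ih => rw [mul_add_one, ← add_assoc]; exact (lucas_add_modEq h₀ h₁ _).trans ih
  simpa only [Nat.mod_add_div] using periodic (n / p) (n % p)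

lemma odd_lucas_of_not_three_dvd {n : ℕ} (h : ¬ 3 ∣ n) : Odd (lucas n) := by
  rw [Int.odd_iff, lucas_modEq_lucas_mod (m := 2) (p := 3) (by decide) (by decide) n]
  rcases (by omega : n % 3 = 1 ∨ n % 3 = 2) with hr | hr <;> rw [hr] <;> decide

lemma lucas_add_one_add_neg_one_pow_modEq_four {n : ℕ} (h : 3 ∣ n) :
    lucas n + 1 + (-1) ^ n ≡ 4 [ZMOD 8] := by
  have hL := lucas_modEq_lucas_mod (m := 8) (p := 12) (by decide) (by decide) n
  rw [neg_one_pow_eq_pow_mod_two, show n % 2 = n % 12 % 2 by omega]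
  refine ((hL.add_right _).add_right _).trans ?_
  have : n % 12 < 12 := Nat.mod_lt _ (by norm_num)
  have h3 : 3 ∣ n % 12 := by omega
  generalize n % 12 = r at *
  interval_cases r <;> first | omega | decide

lemma even_one_add_neg_one_pow (n : ℕ) : Even (1 + (-1 : ℤ) ^ n) := by
  rcases neg_one_pow_eq_or ℤ n with h | h <;> simp [h]

lemma padicValInt_eq_of_modEq_pow {p : ℕ} (hp : 1 < p) {a : ℤ} {k : ℕ}
    (h : a ≡ p ^ k [ZMOD p ^ (k + 1)]) : padicValInt p a = k := by
  have hdvd : (p : ℤ) ^ k ∣ a :=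
    ((h.of_dvd (pow_dvd_pow _ k.le_succ)).dvd_iff).2 dvd_rfl
  have hndvd : ¬ (p : ℤ) ^ (k + 1) ∣ a := by
    rw [h.dvd_iff]
    exact_mod_cast (Nat.pow_dvd_pow_iff_le_right hp).not.2 (by omega)
  rw [padicValInt_dvd_iff_of_ne_one hp.ne'] at hdvd hndvd
  omega

lemma lucas_eq_pow_add_pow {R : Type*} [CommRing R] {x y : R} (hsum : x + y = 1)
    (hprod : x * y = -1) (n : ℕ) : (lucas n : R) = x ^ n + y ^ n := by
  induction n using Nat.twoStepInduction with
  | zero => norm_num [lucas]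
  | one => simp [lucas, hsum]
  | more n ih₀ ih₁ =>
    rw [lucas_add_two, Int.cast_add, ih₀, ih₁]
    linear_combination (-(x ^ n * x + y ^ n * y)) * hsum + (x ^ n + y ^ n) * hprod

open Real goldenRatio in
lemma lucas_two_mul (m : ℕ) : lucas (2 * m) = lucas m ^ 2 - 2 * (-1) ^ m := by
  apply Int.cast_injective (α := ℝ)
  push_cast
  simp only [lucas_eq_pow_add_pow goldenRatio_add_goldenConj goldenRatio_mul_goldenConj]
  rw [← goldenRatio_mul_goldenConj, mul_pow]
  ring

lemma lucas_two_mul_sub_one_sub_neg_one_pow (m : ℕ) :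
    lucas (2 * m) - 1 - (-1) ^ (2 * m) =
      (lucas m - 1 - (-1) ^ m) * (lucas m + 1 + (-1) ^ m) := by
  have hsq : ((-1 : ℤ) ^ m) ^ 2 = 1 := by rw [← pow_mul, mul_comm, pow_mul, neg_one_sq, one_pow]
  rw [lucas_two_mul, (even_two_mul m).neg_one_pow]
  linear_combination hsq

lemma padicValInt_two_lucas_add_one_add_neg_one_pow {n : ℕ} (h : 3 ∣ n) :
    padicValInt 2 (lucas n + 1 + (-1) ^ n) = 2 :=
  padicValInt_eq_of_modEq_pow one_lt_two (lucas_add_one_add_neg_one_pow_modEq_four h)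

lemma padicValInt_two_lucas_two_pow_mul_sub {o : ℕ} (ho : Odd o) (h : 3 ∣ o) (k : ℕ) :
    padicValInt 2 (lucas (2 ^ k * o) - 1 - (-1) ^ (2 ^ k * o)) = 2 + 2 * k := by
  induction k with
  | zero =>
    have hAB : lucas o - 1 - (-1) ^ o = lucas o + 1 + (-1) ^ o := by
      rw [ho.neg_one_pow]; ring
    simpa [hAB] using padicValInt_two_lucas_add_one_add_neg_one_pow h
  | succ k ih =>
    have hA : lucas (2 ^ k * o) - 1 - (-1) ^ (2 ^ k * o) ≠ 0 := by
      rintro h0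
      rw [h0, padicValInt.zero] at ih
      omega
    have hB := padicValInt_two_lucas_add_one_add_neg_one_pow (dvd_mul_of_dvd_right h (2 ^ k))
    have hB0 : lucas (2 ^ k * o) + 1 + (-1) ^ (2 ^ k * o) ≠ 0 := by
      rintro h0; simp [h0] at hB
    rw [pow_succ', mul_assoc, lucas_two_mul_sub_one_sub_neg_one_pow, padicValInt.mul hA hB0, ih, hB]
    ring

lemma padicValNat_two_pow_mul_odd {o : ℕ} (ho : Odd o) (k : ℕ) : padicValNat 2 (2 ^ k * o) = k := by
  rw [padicValNat.mul (by positivity) (by rintro rfl; simp at ho), padicValNat.prime_pow,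
    padicValNat.eq_zero_of_not_dvd ho.not_two_dvd_nat, add_zero]

theorem nu_two_lucas_norms (x : ℕ) (hx : 1 ≤ x) :
    (3 ∣ x →
      padicValInt 2 (lucas x - 1 - (-1) ^ x) = 2 + 2 * padicValNat 2 x ∧
      padicValInt 2 (lucas x + 1 + (-1) ^ x) = 2) ∧
    (¬ 3 ∣ x →
      Odd (lucas x - 1 - (-1) ^ x) ∧ Odd (lucas x + 1 + (-1) ^ x)) := by
  refine ⟨fun h3 => ⟨?_, padicValInt_two_lucas_add_one_add_neg_one_pow h3⟩, fun h3 => ?_⟩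
  · obtain ⟨k, o, ho, rfl⟩ := Nat.exists_eq_two_pow_mul_odd (Nat.one_le_iff_ne_zero.1 hx)
    have h3o : 3 ∣ o := (Nat.Coprime.pow_right k (by norm_num)).dvd_of_dvd_mul_left h3
    rw [padicValNat_two_pow_mul_odd ho, padicValInt_two_lucas_two_pow_mul_sub ho h3o]
  · rw [sub_sub, add_assoc]
    exact ⟨(odd_lucas_of_not_three_dvd h3).sub_even (even_one_add_neg_one_pow x),
      (odd_lucas_of_not_three_dvd h3).add_even (even_one_add_neg_one_pow x)⟩
end

section
/- For every integer x ≥ 1 the following hold: ν_3(L_x − 1 − (−1)^x) = 2 + 2·ν_3(x) if 8 divides x, and ν_3(L_x − 1 − (−1)^x) = 0 otherwise; ν_3(L_x + 1 + (−1)^x) = 2 + 2·ν_3(x) if x ≡ 4 (mod 8), and ν_3(L_x + 1 + (−1)^x) = 0 otherwise. (These integers are, up to sign, the field norms from ℚ(√5) of α^x − 1 and α^x + 1 respectively: (α^x − 1)(β^x − 1) = (−1)^x + 1 − L_x and (α^x + 1)(β^x + 1) = (−1)^x + 1 + L_x, so this is the integer form of the valuation formulas ν_3(α^x − 1) = 1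 + ν_3(x) if 8 | x and 0 otherwise, and ν_3(α^x + 1) = 1 + ν_3(x) if x ≡ 4 (mod 8) and 0 otherwise.) -/
open Nat (fib)
open Real
open scoped goldenRatio

theorem lucas_pos (n : ℕ) : 0 < lucas n := by
  induction n using Nat.twoStepInduction with
  | zero => simp [lucas]
  | one => simp [lucas]
  | more n ih₁ ih₂ => rw [lucas]; positivity

theorem coe_lucas_eq (n : ℕ) : (lucas n : ℝ) = φ ^ n + ψ ^ n := by
  induction n using Nat.twoStepInduction with
  | zero => norm_num [lucas]
  | one => simp [lucas, goldenRatio_add_goldenConj]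
  | more n ih₁ ih₂ =>
    rw [lucas]; push_cast [ih₁, ih₂]
    linear_combination (-φ ^ n) * goldenRatio_sq - ψ ^ n * goldenConj_sq

theorem goldenRatio_pow_mul_goldenConj_pow (n : ℕ) : φ ^ n * ψ ^ n = (-1) ^ n := by
  rw [← mul_pow, goldenRatio_mul_goldenConj]

theorem five_mul_coe_fib_sq (n : ℕ) : (5 * fib n ^ 2 : ℝ) = (φ ^ n - ψ ^ n) ^ 2 := by
  rw [coe_fib_eq, div_pow, Real.sq_sqrt (by norm_num : (0:ℝ) ≤ 5)]
  field_simp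

theorem lucas_sq_sub_five_mul_fib_sq (n : ℕ) :
    lucas n ^ 2 - 5 * fib n ^ 2 = 4 * (-1) ^ n := by
  have : (lucas n ^ 2 - 5 * fib n ^ 2 : ℝ) = 4 * (-1) ^ n := by
    rw [coe_lucas_eq, five_mul_coe_fib_sq, ← goldenRatio_pow_mul_goldenConj_pow]; ring
  exact_mod_cast this

theorem lucas_two_mul_sub_two_mul_neg_one_pow (n : ℕ) :
    lucas (2 * n) - 2 * (-1) ^ n = 5 * fib n ^ 2 := by
  have : (lucas (2 * n) - 2 * (-1) ^ n : ℝ) = 5 * fib n ^ 2 := by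
    rw [coe_lucas_eq, five_mul_coe_fib_sq, ← goldenRatio_pow_mul_goldenConj_pow]; ring
  exact_mod_cast this

theorem lucas_two_mul_add_two_mul_neg_one_pow (n : ℕ) :
    lucas (2 * n) + 2 * (-1) ^ n = lucas n ^ 2 := by
  have : (lucas (2 * n) + 2 * (-1) ^ n : ℝ) = lucas n ^ 2 := by
    rw [coe_lucas_eq, coe_lucas_eq, ← goldenRatio_pow_mul_goldenConj_pow]; ring
  exact_mod_cast this

theorem fib_two_mul_eq_fib_mul_lucas (n : ℕ) : (fib (2 * n) : ℤ) = fib n * lucas n := by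
  have : (fib (2 * n) : ℝ) = fib n * lucas n := by
    rw [coe_lucas_eq, coe_fib_eq, coe_fib_eq]; ring
  exact_mod_cast this

theorem fib_three_mul (n : ℕ) :
    (fib (3 * n) : ℤ) = fib n * (5 * fib n ^ 2 + 3 * (-1) ^ n) := by
  have : (fib (3 * n) : ℝ) = fib n * (5 * fib n ^ 2 + 3 * (-1) ^ n) := by
    rw [five_mul_coe_fib_sq, ← goldenRatio_pow_mul_goldenConj_pow, coe_fib_eq, coe_fib_eq]; ring
  exact_mod_cast this

theorem dvd_fib_iff_dvd_of_minimal {d r : ℕ} (hr : d ∣ fib r)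
    (hmin : ∀ k, k ∣ r → d ∣ fib k → k = r) (m : ℕ) : d ∣ fib m ↔ r ∣ m := by
  refine ⟨fun h => ?_, fun h => hr.trans (Nat.fib_dvd _ _ h)⟩
  have hgcd : d ∣ fib (m.gcd r) := by rw [Nat.fib_gcd]; exact Nat.dvd_gcd h hr
  rw [← hmin _ (Nat.gcd_dvd_right m r) hgcd]
  exact Nat.gcd_dvd_left m r

theorem three_dvd_fib_iff (m : ℕ) : 3 ∣ fib m ↔ 4 ∣ m := by
  refine dvd_fib_iff_dvd_of_minimal (by decide) (fun k hk h => ?_) m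
  have := Nat.le_of_dvd (by norm_num) hk
  interval_cases k <;> simp_all [Nat.fib_add_two]

theorem nine_dvd_fib_iff (m : ℕ) : 9 ∣ fib m ↔ 12 ∣ m := by
  refine dvd_fib_iff_dvd_of_minimal (by decide) (fun k hk h => ?_) m
  have := Nat.le_of_dvd (by norm_num) hk
  interval_cases k <;> simp_all [Nat.fib_add_two]

theorem padicValNat_eq_one_of_dvd_of_not_sq_dvd {p a : ℕ} [Fact p.Prime] (h : p ∣ a)
    (h2 : ¬ p ^ 2 ∣ a) : padicValNat p a = 1 := by
  have ha : a ≠ 0 := by rintro rfl; exact h2 (dvd_zero _)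
  have h1 := (padicValNat_dvd_iff_le (p := p) (n := 1) ha).1 (by rwa [pow_one])
  have h2' := mt (padicValNat_dvd_iff_le (p := p) (n := 2) ha).2 h2
  omega

theorem padicValNat_three_two_mul (m : ℕ) : padicValNat 3 (2 * m) = padicValNat 3 m := by
  rcases eq_or_ne m 0 with rfl | hm
  · simp
  rw [padicValNat.mul two_ne_zero hm, padicValNat.eq_zero_of_not_dvd (by decide), zero_add]

theorem padicValNat_three_fib_of_four_dvd {m : ℕ} (hm : 4 ∣ m) (hm0 : m ≠ 0) :
    padicValNat 3 (fib m) = padicValNat 3 m + 1 := by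
  induction m using Nat.strong_induction_on with
  | _ m ih =>
  by_cases h3 : 3 ∣ m
  · obtain ⟨n, rfl⟩ := h3
    have hn4 : 4 ∣ n := by omega
    have hn0 : n ≠ 0 := by omega
    obtain ⟨c, hc⟩ := (three_dvd_fib_iff n).2 hn4
    have hfactor : fib (3 * n) = fib n * 3 * (15 * c ^ 2 + 1) := by
      have hn : ((-1) ^ n : ℤ) = 1 :=
        (even_iff_two_dvd.2 (dvd_trans (by norm_num) hn4)).neg_one_pow
      have hsum : (5 * fib n ^ 2 + 3 * 1 : ℤ) = 3 * (15 * c ^ 2 + 1) := by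
        rw [hc]; push_cast; ring
      zify; rw [fib_three_mul, hn, hsum]; ring
    have hc3 : ¬ 3 ∣ 15 * c ^ 2 + 1 := by omega
    have hfib : fib n ≠ 0 := (Nat.fib_pos.2 (Nat.pos_of_ne_zero hn0)).ne'
    rw [hfactor, padicValNat.mul (mul_ne_zero hfib three_ne_zero) (by positivity),
      padicValNat.mul hfib three_ne_zero, padicValNat_self, padicValNat.eq_zero_of_not_dvd hc3,
      ih n (by omega) hn4 hn0, padicValNat.mul three_ne_zero hn0, padicValNat_self]
    ring
  · rw [padicValNat.eq_zero_of_not_dvd h3]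
    exact padicValNat_eq_one_of_dvd_of_not_sq_dvd ((three_dvd_fib_iff m).2 hm)
      (by rw [show (3 : ℕ) ^ 2 = 9 from rfl, nine_dvd_fib_iff]; omega)

theorem not_three_dvd_lucas {m : ℕ} (hm : m % 4 ≠ 2) : ¬ (3 : ℤ) ∣ lucas m := by
  intro hL
  rcases Nat.even_or_odd' m with ⟨k, rfl | rfl⟩
  · have hF : (3 : ℤ) ∣ fib (2 * k) := by
      exact_mod_cast (three_dvd_fib_iff _).2 (by omega)
    have h4 : (3 : ℤ) ∣ 4 * (-1) ^ (2 * k) := by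
      rw [← lucas_sq_sub_five_mul_fib_sq]
      exact dvd_sub (dvd_pow hL two_ne_zero) (dvd_mul_of_dvd_right (dvd_pow hF two_ne_zero) _)
    norm_num [pow_mul] at h4
  · have hF : 3 ∣ fib (2 * (2 * k + 1)) := by
      exact_mod_cast fib_two_mul_eq_fib_mul_lucas (2 * k + 1) ▸ dvd_mul_of_dvd_right hL _
    have := (three_dvd_fib_iff _).1 hF
    omega

theorem padicValInt_three_lucas {m : ℕ} (hm : m % 4 = 2) :
    padicValInt 3 (lucas m) = padicValNat 3 m + 1 := by
  have hfib : (fib m : ℤ) ≠ 0 := Int.natCast_ne_zero.2 (Nat.fib_pos.2 (by omega)).ne'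
  have h := congrArg (padicValInt 3) (fib_two_mul_eq_fib_mul_lucas m)
  rw [padicValInt.mul hfib (lucas_pos m).ne', padicValInt.of_nat, padicValInt.of_nat,
    padicValNat_three_fib_of_four_dvd (by omega) (by omega), padicValNat_three_two_mul,
    padicValNat.eq_zero_of_not_dvd (mt (three_dvd_fib_iff m).1 (by omega))] at h
  omega

theorem padicValInt_three_five_mul_fib_sq {m : ℕ} (hm : m ≠ 0) :
    padicValInt 3 (5 * fib m ^ 2) = if 4 ∣ m then 2 + 2 * padicValNat 3 m else 0 := by
  have hfib : fib m ≠ 0 := (Nat.fib_pos.2 (Nat.pos_of_ne_zero hm)).ne'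
  rw [show (5 * fib m ^ 2 : ℤ) = ((5 * fib m ^ 2 : ℕ) : ℤ) by push_cast; rfl,
    padicValInt.of_nat,
    padicValNat.mul (by norm_num) (pow_ne_zero _ hfib), padicValNat.pow,
    padicValNat.eq_zero_of_not_dvd (by norm_num : ¬ 3 ∣ 5), zero_add]
  split_ifs with h4
  · rw [padicValNat_three_fib_of_four_dvd h4 hm]; ring
  · rw [padicValNat.eq_zero_of_not_dvd (mt (three_dvd_fib_iff m).1 h4)]

theorem padicValInt_three_lucas_sq (m : ℕ) :
    padicValInt 3 (lucas m ^ 2) = if m % 4 = 2 then 2 + 2 * padicValNat 3 m else 0 := by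
  rw [sq, padicValInt.mul (lucas_pos m).ne' (lucas_pos m).ne']
  split_ifs with h
  · rw [padicValInt_three_lucas h]; ring
  · rw [padicValInt.eq_zero_of_not_dvd (not_three_dvd_lucas h)]

theorem padicValInt_three_lucas_sub_one_sub_neg_one_pow {x : ℕ} (hx : x ≠ 0) :
    padicValInt 3 (lucas x - 1 - (-1) ^ x) =
      if 8 ∣ x then 2 + 2 * padicValNat 3 x else 0 := by
  rcases Nat.even_or_odd' x with ⟨m, rfl | rfl⟩
  · rw [(even_two_mul m).neg_one_pow, padicValNat_three_two_mul]
    rcases Nat.even_or_odd' m with ⟨k, rfl | rfl⟩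
    · rw [show lucas (2 * (2 * k)) - 1 - 1 = 5 * fib (2 * k) ^ 2 by
          rw [← lucas_two_mul_sub_two_mul_neg_one_pow, (even_two_mul k).neg_one_pow]; ring,
        padicValInt_three_five_mul_fib_sq (by omega)]
      simp only [show 8 ∣ 2 * (2 * k) ↔ 4 ∣ 2 * k by omega]
    · rw [show lucas (2 * (2 * k + 1)) - 1 - 1 = lucas (2 * k + 1) ^ 2 by
          rw [← lucas_two_mul_add_two_mul_neg_one_pow, (odd_two_mul_add_one k).neg_one_pow]; ring,
        padicValInt_three_lucas_sq, if_neg (by omega), if_neg (by omega)]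
  · rw [(odd_two_mul_add_one m).neg_one_pow, sub_neg_eq_add, sub_add_cancel,
      padicValInt.eq_zero_of_not_dvd (not_three_dvd_lucas (by omega)), if_neg (by omega)]

theorem padicValInt_three_lucas_add_one_add_neg_one_pow (x : ℕ) :
    padicValInt 3 (lucas x + 1 + (-1) ^ x) =
      if x % 8 = 4 then 2 + 2 * padicValNat 3 x else 0 := by
  rcases Nat.even_or_odd' x with ⟨m, rfl | rfl⟩
  · rw [(even_two_mul m).neg_one_pow, padicValNat_three_two_mul]
    rcases Nat.even_or_odd' m with ⟨k, rfl | rfl⟩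
    · rw [show lucas (2 * (2 * k)) + 1 + 1 = lucas (2 * k) ^ 2 by
          rw [← lucas_two_mul_add_two_mul_neg_one_pow, (even_two_mul k).neg_one_pow]; ring,
        padicValInt_three_lucas_sq]
      simp only [show 2 * (2 * k) % 8 = 4 ↔ 2 * k % 4 = 2 by omega]
    · rw [show lucas (2 * (2 * k + 1)) + 1 + 1 = 5 * fib (2 * k + 1) ^ 2 by
          rw [← lucas_two_mul_sub_two_mul_neg_one_pow, (odd_two_mul_add_one k).neg_one_pow]; ring,
        padicValInt_three_five_mul_fib_sq (by omega), if_neg (by omega), if_neg (by omega)]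
  · rw [(odd_two_mul_add_one m).neg_one_pow, add_neg_cancel_right,
      padicValInt.eq_zero_of_not_dvd (not_three_dvd_lucas (by omega)), if_neg (by omega)]

theorem nu_three_lucas_norms (x : ℕ) (hx : 1 ≤ x) :
    (8 ∣ x →
      padicValInt 3 (lucas x - 1 - (-1) ^ x) = 2 + 2 * padicValNat 3 x) ∧
    (¬ 8 ∣ x →
      padicValInt 3 (lucas x - 1 - (-1) ^ x) = 0) ∧
    (x % 8 = 4 →
      padicValInt 3 (lucas x + 1 + (-1) ^ x) = 2 + 2 * padicValNat 3 x) ∧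
    (¬ x % 8 = 4 →
      padicValInt 3 (lucas x + 1 + (-1) ^ x) = 0) := by
  have hx0 : x ≠ 0 := Nat.one_le_iff_ne_zero.1 hx
  rw [padicValInt_three_lucas_sub_one_sub_neg_one_pow hx0,
    padicValInt_three_lucas_add_one_add_neg_one_pow x]
  exact ⟨fun h => if_pos h, fun h => if_neg h, fun h => if_pos h, fun h => if_neg h⟩
end
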